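/- arXiv:2305.08712 — 8 statements merged into one kernel-verified Lean document; each statement's English description precedes it below -/
import Mathlib

section
/- Assume the guidance-barrier conditions (i) and (ii) hold for (v, û). Let x₀ ∈ X with v(x₀) > 0 and let x(·) be the closed-loop trajectory from x₀ under û. If k ∈ ℕ is such that x(i) ∉ T for all i < k, then x(i) ∈ X for all i ≤ k and v(x(k)) ≥ λ^k · v(x₀). -/
/-- Under guidance-barrier conditions (i) and (ii), for the
closed-loop trajectory from `x₀ ∈ X` with `v x₀ > 0`: if the target set `T`
has not been reached before time `k`, then the trajectory stays in `X` up to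
time `k` and `v (x k) ≥ lam ^ k * v x₀`. -/
theorem stmt1 {n m : ℕ}
    (f : (Fin n → ℝ) → (Fin m → ℝ) → (Fin n → ℝ))
    (U : Set (Fin m → ℝ)) (X T Y : Set (Fin n → ℝ))
    (hTX : T ⊆ X) (hXY : X ⊆ Y)
    (hfY : ∀ x ∈ X, ∀ u ∈ U, f x u ∈ Y)
    (uhat : (Fin n → ℝ) → (Fin m → ℝ)) (huhat : ∀ x ∈ X, uhat x ∈ U)
    (lam M : ℝ) (hlam : 1 < lam) (hM : 0 < M)
    (v : (Fin n → ℝ) → ℝ)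
    (hi : ∀ x ∈ X \ T, v (f x (uhat x)) ≥ lam * v x)
    (hii : ∀ x ∈ Y \ X, v x ≤ 0)
    (x₀ : Fin n → ℝ) (hx₀ : x₀ ∈ X) (hv₀ : 0 < v x₀)
    (x : ℕ → (Fin n → ℝ)) (hx0 : x 0 = x₀)
    (hdyn : ∀ k, x (k + 1) = f (x k) (uhat (x k)))
    (k : ℕ) (hk : ∀ i < k, x i ∉ T) :
    (∀ i ≤ k, x i ∈ X) ∧ v (x k) ≥ lam ^ k * v x₀ := by
  have hlam0 : (0:ℝ) < lam := lt_trans one_pos hlam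
  have key : ∀ j ≤ k, x j ∈ X ∧ v (x j) ≥ lam ^ j * v x₀ := by
    intro j
    induction j with
    | zero => intro _; rw [hx0]; exact ⟨hx₀, by simp⟩
    | succ j ih =>
      intro hjk
      obtain ⟨hjX, hjv⟩ := ih (le_of_lt (Nat.lt_of_succ_le hjk))
      have hjT : x j ∉ T := hk j (Nat.lt_of_succ_le hjk)
      have hstep : v (x (j+1)) ≥ lam * v (x j) := by
        rw [hdyn j]; exact hi _ ⟨hjX, hjT⟩
      have hvs : v (x (j+1)) ≥ lam ^ (j+1) * v x₀ := by
        calc v (x (j+1)) ≥ lam * v (x j) := hstep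
          _ ≥ lam * (lam ^ j * v x₀) := by
              exact mul_le_mul_of_nonneg_left hjv (le_of_lt hlam0)
          _ = lam ^ (j+1) * v x₀ := by ring
      have hpos : 0 < v (x (j+1)) :=
        lt_of_lt_of_le (mul_pos (pow_pos hlam0 _) hv₀) hvs
      have hY : x (j+1) ∈ Y := by
        rw [hdyn j]; exact hfY _ hjX _ (huhat _ hjX)
      have hX : x (j+1) ∈ X := by
        by_contra h
        exact absurd (hii _ ⟨hY, h⟩) (not_le.mpr hpos)
      exact ⟨hX, hvs⟩
  exact ⟨fun i hi' => (key i hi').1, (key k le_rfl).2⟩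
end

section
/- Assume the guidance-barrier conditions (i) and (ii) hold for (v, û) and that v is bounded above on Y. Then for every x₀ ∈ X with v(x₀) > 0 there exists L ∈ ℕ such that the closed-loop trajectory from x₀ under û satisfies x(L) ∈ T, x(i) ∉ T for all i < L, and x(i) ∈ X for all i ≤ L. -/
/-- Under guidance-barrier conditions (i) and (ii), with `v`
bounded above on `Y`, every initial state `x₀ ∈ X` with `v x₀ > 0` yields a
closed-loop trajectory that reaches `T` at some finite time `L`, staying in
`X` up to time `L`. -/
theorem stmt2 {n m : ℕ}
    (f : (Fin n → ℝ) → (Fin m → ℝ) → (Fin n → ℝ))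
    (U : Set (Fin m → ℝ)) (X T Y : Set (Fin n → ℝ))
    (hTX : T ⊆ X) (hXY : X ⊆ Y)
    (hfY : ∀ x ∈ X, ∀ u ∈ U, f x u ∈ Y)
    (uhat : (Fin n → ℝ) → (Fin m → ℝ)) (huhat : ∀ x ∈ X, uhat x ∈ U)
    (lam M : ℝ) (hlam : 1 < lam) (hM : 0 < M)
    (v : (Fin n → ℝ) → ℝ)
    (hi : ∀ x ∈ X \ T, v (f x (uhat x)) ≥ lam * v x)
    (hii : ∀ x ∈ Y \ X, v x ≤ 0)
    (hbdd : ∃ B : ℝ, ∀ y ∈ Y, v y ≤ B)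
    (x₀ : Fin n → ℝ) (hx₀ : x₀ ∈ X) (hv₀ : 0 < v x₀)
    (x : ℕ → (Fin n → ℝ)) (hx0 : x 0 = x₀)
    (hdyn : ∀ k, x (k + 1) = f (x k) (uhat (x k))) :
    ∃ L : ℕ, x L ∈ T ∧ (∀ i < L, x i ∉ T) ∧ (∀ i ≤ L, x i ∈ X) := by
  obtain ⟨B, hB⟩ := hbdd
  -- key growth lemma
  have key : ∀ k : ℕ, (∀ i < k, x i ∉ T) → x k ∈ X ∧ lam ^ k * v x₀ ≤ v (x k) := by
    intro k
    induction k with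
    | zero => intro _; simpa [hx0] using hx₀
    | succ k ih =>
      intro h
      have hk : ∀ i < k, x i ∉ T := fun i hi' => h i (hi'.trans (Nat.lt_succ_self k))
      obtain ⟨hxkX, hxkv⟩ := ih hk
      have hxkT : x k ∉ T := h k (Nat.lt_succ_self k)
      have hgrow : v (x (k + 1)) ≥ lam * v (x k) := by
        rw [hdyn k]; exact hi (x k) ⟨hxkX, hxkT⟩
      have hvk : 0 < v (x k) := lt_of_lt_of_le (by positivity) hxkv
      have hvsucc : lam ^ (k + 1) * v x₀ ≤ v (x (k + 1)) := by
        calc lam ^ (k + 1) * v x₀ = lam * (lam ^ k * v x₀) := by ring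
        _ ≤ lam * v (x k) := by
            apply mul_le_mul_of_nonneg_left hxkv (by linarith)
        _ ≤ v (x (k + 1)) := hgrow
      have hY : x (k + 1) ∈ Y := by
        rw [hdyn k]; exact hfY _ hxkX _ (huhat _ hxkX)
      have hX : x (k + 1) ∈ X := by
        by_contra hc
        have := hii _ ⟨hY, hc⟩
        have : (0:ℝ) < lam ^ (k+1) * v x₀ := by positivity
        linarith
      exact ⟨hX, hvsucc⟩
  -- existence of a hitting time
  have hex : ∃ k, x k ∈ T := by
    by_contra hc
    push_neg at hc
    have hall : ∀ k : ℕ, lam ^ k * v x₀ ≤ B := fun k => by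
      obtain ⟨hX, hv⟩ := key k (fun i _ => hc i)
      exact hv.trans (hB _ (hXY hX))
    obtain ⟨k, hk⟩ := pow_unbounded_of_one_lt (B / v x₀) hlam
    have := hall k
    have : lam ^ k ≤ B / v x₀ := by
      rw [le_div_iff₀ hv₀]; linarith
    linarith
  classical
  refine ⟨Nat.find hex, Nat.find_spec hex, fun i hi' => Nat.find_min hex hi', ?_⟩
  intro i hi'
  rcases lt_or_eq_of_le hi' with h | h
  · exact (key i (fun j hj => Nat.find_min hex (hj.trans h))).1
  · rw [h]; exact hTX (Nat.find_spec hex)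
end

section
/- Assume the guidance-barrier conditions (i), (ii), (iii) hold for (v, û). Let x₀ ∈ X with v(x₀) > 0 and suppose L ∈ ℕ is the first hitting time of T along the closed-loop trajectory from x₀ under û (i.e., x(L) ∈ T and x(i) ∉ T for all i < L). Then λ^L · v(x₀) ≤ M; in particular L ≤ log_λ(M / v(x₀)). -/
/-- Under guidance-barrier conditions (i), (ii), (iii), if `L` is
the first hitting time of `T` along the closed-loop trajectory from `x₀ ∈ X`
with `v x₀ > 0`, then `lam ^ L * v x₀ ≤ M`; in particular
`L ≤ log_lam (M / v x₀)`. -/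
theorem stmt3 {n m : ℕ}
    (f : (Fin n → ℝ) → (Fin m → ℝ) → (Fin n → ℝ))
    (U : Set (Fin m → ℝ)) (X T Y : Set (Fin n → ℝ))
    (hTX : T ⊆ X) (hXY : X ⊆ Y)
    (hfY : ∀ x ∈ X, ∀ u ∈ U, f x u ∈ Y)
    (uhat : (Fin n → ℝ) → (Fin m → ℝ)) (huhat : ∀ x ∈ X, uhat x ∈ U)
    (lam M : ℝ) (hlam : 1 < lam) (hM : 0 < M)
    (v : (Fin n → ℝ) → ℝ)
    (hi : ∀ x ∈ X \ T, v (f x (uhat x)) ≥ lam * v x)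
    (hii : ∀ x ∈ Y \ X, v x ≤ 0)
    (hiii : ∀ x ∈ T, v x ≤ M)
    (x₀ : Fin n → ℝ) (hx₀ : x₀ ∈ X) (hv₀ : 0 < v x₀)
    (x : ℕ → (Fin n → ℝ)) (hx0 : x 0 = x₀)
    (hdyn : ∀ k, x (k + 1) = f (x k) (uhat (x k)))
    (L : ℕ) (hLT : x L ∈ T) (hfirst : ∀ i < L, x i ∉ T) :
    lam ^ L * v x₀ ≤ M ∧ (L : ℝ) ≤ Real.logb lam (M / v x₀) := by
  have hlam0 : (0:ℝ) < lam := lt_trans one_pos hlam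
  have key : ∀ k, k ≤ L → x k ∈ X ∧ lam ^ k * v x₀ ≤ v (x k) := by
    intro k
    induction k with
    | zero => intro _; rw [hx0]; simp [hx₀]
    | succ k ih =>
      intro hk
      have hkL : k < L := Nat.lt_of_succ_le hk
      obtain ⟨hXk, hvk⟩ := ih (le_of_lt hkL)
      have hnotT : x k ∉ T := hfirst k hkL
      have hstep : v (x (k+1)) ≥ lam * v (x k) := by
        rw [hdyn k]; exact hi _ ⟨hXk, hnotT⟩
      have hge : lam ^ (k+1) * v x₀ ≤ v (x (k+1)) := by
        calc lam ^ (k+1) * v x₀ = lam * (lam ^ k * v x₀) := by ring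
        _ ≤ lam * v (x k) := by
          exact mul_le_mul_of_nonneg_left hvk (le_of_lt hlam0)
        _ ≤ v (x (k+1)) := hstep
      have hpos : 0 < v (x (k+1)) :=
        lt_of_lt_of_le (mul_pos (pow_pos hlam0 _) hv₀) hge
      have hYk : x (k+1) ∈ Y := by
        rw [hdyn k]; exact hfY _ hXk _ (huhat _ hXk)
      have hXk1 : x (k+1) ∈ X := by
        by_contra h
        exact absurd (hii _ ⟨hYk, h⟩) (not_le.mpr hpos)
      exact ⟨hXk1, hge⟩
  have h1 : lam ^ L * v x₀ ≤ M :=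
    le_trans (key L le_rfl).2 (hiii _ hLT)
  refine ⟨h1, ?_⟩
  have hv₀' : v x₀ ≠ 0 := ne_of_gt hv₀
  have h2 : lam ^ L ≤ M / v x₀ := (le_div_iff₀ hv₀).mpr h1
  have := Real.logb_le_logb_of_le hlam (pow_pos hlam0 L) h2
  calc (L:ℝ) = Real.logb lam (lam ^ L) := by
        rw [Real.logb_pow, Real.logb_self_eq_one hlam]; ring
  _ ≤ Real.logb lam (M / v x₀) := this
end

section
/- (Theorem 1: reach-avoid set) Assume the guidance-barrier conditions (i), (ii), (iii) hold for (v, û) and that v is bounded above on Y. Then R = {x ∈ X : v(x) > 0} is a reach-avoid set: for every x₀ ∈ R there exists L ∈ ℕ with L ≤ log_λ(M / v(x₀)) such that the closed-loop trajectory from x₀ under û satisfies x(L) ∈ T, x(i) ∉ T for all i < L, and x(i) ∈ X for all i ≤ L. -/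
/-- The closed-loop trajectory of the system `f` under the feedback
controller `uhat`, starting from `x₀`. -/
def closedLoop {n m : ℕ} (f : (Fin n → ℝ) → (Fin m → ℝ) → (Fin n → ℝ))
    (uhat : (Fin n → ℝ) → (Fin m → ℝ)) (x₀ : Fin n → ℝ) : ℕ → (Fin n → ℝ)
  | 0 => x₀
  | k + 1 => f (closedLoop f uhat x₀ k) (uhat (closedLoop f uhat x₀ k))

/-- Theorem 1: reach-avoid set: Under guidance-barrier
conditions (i), (ii), (iii), with `v` bounded above on `Y`, the set
`R = {x ∈ X | v x > 0}` is a reach-avoid set: from every `x₀ ∈ R` the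
closed-loop trajectory under `uhat` reaches `T` at some first time
`L ≤ log_lam (M / v x₀)` while staying inside `X`. -/
theorem stmt4 {n m : ℕ}
    (f : (Fin n → ℝ) → (Fin m → ℝ) → (Fin n → ℝ))
    (U : Set (Fin m → ℝ)) (X T Y : Set (Fin n → ℝ))
    (hTX : T ⊆ X) (hXY : X ⊆ Y)
    (hfY : ∀ x ∈ X, ∀ u ∈ U, f x u ∈ Y)
    (uhat : (Fin n → ℝ) → (Fin m → ℝ)) (huhat : ∀ x ∈ X, uhat x ∈ U)
    (lam M : ℝ) (hlam : 1 < lam) (hM : 0 < M)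
    (v : (Fin n → ℝ) → ℝ)
    (hi : ∀ x ∈ X \ T, v (f x (uhat x)) ≥ lam * v x)
    (hii : ∀ x ∈ Y \ X, v x ≤ 0)
    (hiii : ∀ x ∈ T, v x ≤ M)
    (hbdd : ∃ B : ℝ, ∀ y ∈ Y, v y ≤ B) :
    ∀ x₀ ∈ {x ∈ X | 0 < v x}, ∃ L : ℕ,
      (L : ℝ) ≤ Real.logb lam (M / v x₀) ∧
      closedLoop f uhat x₀ L ∈ T ∧
      (∀ i < L, closedLoop f uhat x₀ i ∉ T) ∧
      (∀ i ≤ L, closedLoop f uhat x₀ i ∈ X) := by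
  rintro x₀ ⟨hx₀X, hx₀v⟩
  set x : ℕ → (Fin n → ℝ) := closedLoop f uhat x₀ with hx
  have hlam0 : (0:ℝ) < lam := lt_trans one_pos hlam
  -- key induction claim
  have key : ∀ k : ℕ, (∀ i < k, x i ∉ T) → x k ∈ X ∧ lam ^ k * v x₀ ≤ v (x k) := by
    intro k
    induction k with
    | zero => intro _; exact ⟨hx₀X, by simp [hx, closedLoop]⟩
    | succ k ih =>
      intro h
      obtain ⟨hXk, hvk⟩ := ih (fun i hi' => h i (Nat.lt_succ_of_lt hi'))
      have hnT : x k ∉ T := h k (Nat.lt_succ_self k)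
      have hstep : v (x (k+1)) ≥ lam * v (x k) := hi (x k) ⟨hXk, hnT⟩
      have hpos : 0 < lam ^ (k+1) * v x₀ := by positivity
      have hge : lam ^ (k+1) * v (x₀) ≤ v (x (k+1)) := by
        calc lam ^ (k+1) * v x₀ = lam * (lam ^ k * v x₀) := by ring
        _ ≤ lam * v (x k) := by
            exact mul_le_mul_of_nonneg_left hvk (le_of_lt hlam0)
        _ ≤ v (x (k+1)) := hstep
      have hY : x (k+1) ∈ Y := hfY (x k) hXk (uhat (x k)) (huhat (x k) hXk)
      have hXk1 : x (k+1) ∈ X := by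
        by_contra hnot
        have := hii (x (k+1)) ⟨hY, hnot⟩
        linarith
      exact ⟨hXk1, hge⟩
  -- existence of a hitting time
  obtain ⟨B, hB⟩ := hbdd
  have hex : ∃ k, x k ∈ T := by
    by_contra hnone
    push_neg at hnone
    have hall : ∀ k, lam ^ k * v x₀ ≤ B := by
      intro k
      obtain ⟨hXk, hvk⟩ := key k (fun i _ => hnone i)
      exact le_trans hvk (hB (x k) (hXY hXk))
    obtain ⟨k, hk⟩ := pow_unbounded_of_one_lt (B / v x₀) hlam
    have := hall k
    have h2 : B / v x₀ * v x₀ < lam ^ k * v x₀ :=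
      mul_lt_mul_of_pos_right hk hx₀v
    rw [div_mul_cancel₀ B (ne_of_gt hx₀v)] at h2
    linarith
  classical
  set L := Nat.find hex with hL
  have hLt : x L ∈ T := Nat.find_spec hex
  have hlt : ∀ i < L, x i ∉ T := fun i hi' => Nat.find_min hex hi'
  obtain ⟨hXL, hvL⟩ := key L hlt
  refine ⟨L, ?_, hLt, hlt, ?_⟩
  · -- log bound
    have hvLM : v (x L) ≤ M := hiii (x L) hLt
    have hpow : lam ^ L ≤ M / v x₀ := by
      rw [le_div_iff₀ hx₀v]
      linarith
    have h1 : Real.logb lam (lam ^ L) ≤ Real.logb lam (M / v x₀) :=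
      Real.logb_le_logb_of_le hlam (pow_pos hlam0 L) hpow
    calc (L : ℝ) = Real.logb lam (lam ^ L) := by
          rw [Real.logb_pow, Real.logb_self_eq_one hlam]; ring
      _ ≤ Real.logb lam (M / v x₀) := h1
  · intro i hiL
    exact (key i (fun j hj => hlt j (lt_of_lt_of_le hj hiL))).1
end

section
/- (Feasibility of RAMPC at time t = 0) Assume the guidance-barrier conditions (i) and (ii) hold for (v, û). Let N ≥ 1, let x₀ ∈ X with v(x₀) > 0, let x(·) be the closed-loop trajectory from x₀ under û, and suppose x(i) ∉ T for all i < N. Then the state sequence (x(0), …, x(N)) and the input sequence (û(x(0)), …, û(x(N−1))) satisfy all constraints of the RAMPC problem at time 0: x(k+1) = f(x(k), û(x(k))) and û(x(k)) ∈ U for all k < N, x(k) ∈ X for all k ≤ N, and v(x(N)) ≥ λ^N · v(x₀). -/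
/-- Feasibility of RAMPC at time `t = 0`: under guidance-barrier
conditions (i) and (ii), if the closed-loop trajectory from `x₀ ∈ X` with
`v x₀ > 0` has not entered `T` before time `N`, then the first `N` steps of the
closed-loop trajectory and inputs satisfy all constraints of the RAMPC problem
at time `0`. -/
theorem stmt7 {n m : ℕ}
    (f : (Fin n → ℝ) → (Fin m → ℝ) → (Fin n → ℝ))
    (U : Set (Fin m → ℝ)) (X T Y : Set (Fin n → ℝ))
    (hTX : T ⊆ X) (hXY : X ⊆ Y)
    (hfY : ∀ x ∈ X, ∀ u ∈ U, f x u ∈ Y)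
    (uhat : (Fin n → ℝ) → (Fin m → ℝ)) (huhat : ∀ x ∈ X, uhat x ∈ U)
    (lam M : ℝ) (hlam : 1 < lam) (hM : 0 < M)
    (v : (Fin n → ℝ) → ℝ)
    (hi : ∀ x ∈ X \ T, v (f x (uhat x)) ≥ lam * v x)
    (hii : ∀ x ∈ Y \ X, v x ≤ 0)
    (N : ℕ) (hN : 1 ≤ N)
    (x₀ : Fin n → ℝ) (hx₀ : x₀ ∈ X) (hv₀ : 0 < v x₀)
    (x : ℕ → (Fin n → ℝ)) (hx0 : x 0 = x₀)
    (hdyn : ∀ k, x (k + 1) = f (x k) (uhat (x k)))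
    (hnotT : ∀ i < N, x i ∉ T) :
    (∀ k < N, x (k + 1) = f (x k) (uhat (x k)) ∧ uhat (x k) ∈ U) ∧
    (∀ k ≤ N, x k ∈ X) ∧
    v (x N) ≥ lam ^ N * v x₀ := by
  have key : ∀ k, k ≤ N → x k ∈ X ∧ v (x k) ≥ lam ^ k * v x₀ := by
    intro k
    induction k with
    | zero =>
      intro _
      refine ⟨by simpa [hx0] using hx₀, by simp [hx0]⟩
    | succ k ih =>
      intro hk
      obtain ⟨hxk, hvk⟩ := ih (Nat.le_of_succ_le hk)
      have hkN : k < N := hk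
      have hmem : x k ∈ X \ T := ⟨hxk, hnotT k hkN⟩
      have hstep : v (x (k + 1)) ≥ lam * v (x k) := by
        rw [hdyn k]; exact hi _ hmem
      have hlp : (0:ℝ) < lam := lt_trans one_pos hlam
      have hpk : (0:ℝ) < lam ^ k := pow_pos hlp k
      have hvk' : v (x (k + 1)) ≥ lam ^ (k + 1) * v x₀ := by
        have h : lam * (lam ^ k * v x₀) = lam ^ (k + 1) * v x₀ := by ring
        nlinarith
      have hvpos : 0 < v (x (k + 1)) := by
        have hpk1 : (0:ℝ) < lam ^ (k + 1) := pow_pos hlp (k + 1)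
        nlinarith
      refine ⟨?_, hvk'⟩
      have hY : x (k + 1) ∈ Y := by
        rw [hdyn k]; exact hfY _ hxk _ (huhat _ hxk)
      by_contra hXc
      exact absurd (hii _ ⟨hY, hXc⟩) (not_le.mpr hvpos)
  exact ⟨fun k hk => ⟨hdyn k, huhat _ (key k hk.le).1⟩, fun k hk => (key k hk).1,
    (key N le_rfl).2⟩
end

section
/- (Recursive feasibility shift step of Theorem 2) Assume the guidance-barrier conditions (i) and (ii) hold for (v, û). Let N ≥ 1 and let (x_k)_{k=0}^{N} ⊆ ℝ^n and (u_k)_{k=0}^{N−1} ⊆ U satisfy x_{k+1} = f(x_k, u_k) for k < N, x_k ∈ X for all k ≤ N, v(x_N) > 0, and x_N ∉ T. Define x_{N+1} = f(x_N, û(x_N)). Then the shifted sequences (x_1, …, x_N, x_{N+1}) and (u_1, …, u_{N−1}, û(x_N)) satisfy: the dynamics x_{k+1} = f(x_k, u_k), all inputs lie in U, all states x_1, …, x_{N+1} lie in X, and v(x_{N+1}) ≥ λ·v(x_N) > 0. -/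
/-- Recursive feasibility shift step of Theorem 2: given a
feasible state/input sequence of length `N` with terminal state `x N ∈ X`,
`v (x N) > 0` and `x N ∉ T`, appending the feedback input `uhat (x N)` yields a
shifted sequence that again satisfies the dynamics, input and state
constraints, with `v (x (N+1)) ≥ lam * v (x N) > 0`. -/
theorem stmt8 {n m : ℕ}
    (f : (Fin n → ℝ) → (Fin m → ℝ) → (Fin n → ℝ))
    (U : Set (Fin m → ℝ)) (X T Y : Set (Fin n → ℝ))
    (hTX : T ⊆ X) (hXY : X ⊆ Y)
    (hfY : ∀ x ∈ X, ∀ u ∈ U, f x u ∈ Y)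
    (uhat : (Fin n → ℝ) → (Fin m → ℝ)) (huhat : ∀ x ∈ X, uhat x ∈ U)
    (lam M : ℝ) (hlam : 1 < lam) (hM : 0 < M)
    (v : (Fin n → ℝ) → ℝ)
    (hi : ∀ x ∈ X \ T, v (f x (uhat x)) ≥ lam * v x)
    (hii : ∀ x ∈ Y \ X, v x ≤ 0)
    (N : ℕ) (hN : 1 ≤ N)
    (x : ℕ → (Fin n → ℝ)) (u : ℕ → (Fin m → ℝ))
    (hdyn : ∀ k < N, x (k + 1) = f (x k) (u k))
    (hu : ∀ k < N, u k ∈ U)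
    (hx : ∀ k ≤ N, x k ∈ X)
    (hvN : 0 < v (x N)) (hNT : x N ∉ T)
    (xN1 : Fin n → ℝ) (hxN1 : xN1 = f (x N) (uhat (x N))) :
    (∀ k, 1 ≤ k → k < N → x (k + 1) = f (x k) (u k)) ∧
    xN1 = f (x N) (uhat (x N)) ∧
    (∀ k, 1 ≤ k → k < N → u k ∈ U) ∧ uhat (x N) ∈ U ∧
    (∀ k, 1 ≤ k → k ≤ N → x k ∈ X) ∧ xN1 ∈ X ∧
    v xN1 ≥ lam * v (x N) ∧ 0 < lam * v (x N) := by
  have hxN : x N ∈ X := hx N le_rfl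
  have hvge : v (f (x N) (uhat (x N))) ≥ lam * v (x N) := hi (x N) ⟨hxN, hNT⟩
  have hpos : 0 < lam * v (x N) := mul_pos (lt_trans one_pos hlam) hvN
  have hY : xN1 ∈ Y := hxN1 ▸ hfY (x N) hxN (uhat (x N)) (huhat (x N) hxN)
  have hX : xN1 ∈ X := by
    by_contra h
    have := hii xN1 ⟨hY, h⟩
    have : v xN1 ≥ lam * v (x N) := hxN1 ▸ hvge
    linarith
  exact ⟨fun k _ hk => hdyn k hk, hxN1, fun k _ hk => hu k hk, huhat (x N) hxN,
    fun k _ hk => hx k hk, hX, hxN1 ▸ hvge, hpos⟩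
end

section
/- (Equation (13): the previous iteration's cost upper-bounds the MPC value) Assume the guidance-barrier conditions (i) and (ii) hold for (v, û), v is bounded above on Y, and N ≥ 1. Suppose N ≤ L and the sequences (x_k)_{k=0}^{L}, (u_k)_{k=0}^{L−1} satisfy: x_{k+1} = f(x_k, u_k) and u_k ∈ U and x_k ∈ X for all k < L; x_k ∉ T for all k < L and x_L ∈ T; u_k = û(x_k) for all N ≤ k < L; and v(x_N) > 0. Then the MPC value at x_0 satisfies V(x_0) ≤ Σ_{k=0}^{L−1} h(x_k, u_k). -/
/-- The first hitting time `L(x₀) = min {k | x(k) ∈ T}` of the target set `T`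
along the closed-loop trajectory from `x₀`. -/
noncomputable def hitTime {n m : ℕ} (f : (Fin n → ℝ) → (Fin m → ℝ) → (Fin n → ℝ))
    (uhat : (Fin n → ℝ) → (Fin m → ℝ)) (T : Set (Fin n → ℝ)) (x₀ : Fin n → ℝ) : ℕ :=
  sInf {k : ℕ | closedLoop f uhat x₀ k ∈ T}

/-- The cost-to-go `Q(x₀) = Σ_{k=0}^{L(x₀)−1} h(x(k), uhat(x(k)))` along the
closed-loop trajectory from `x₀`. -/
noncomputable def costQ {n m : ℕ} (f : (Fin n → ℝ) → (Fin m → ℝ) → (Fin n → ℝ))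
    (uhat : (Fin n → ℝ) → (Fin m → ℝ)) (T : Set (Fin n → ℝ))
    (h : (Fin n → ℝ) → (Fin m → ℝ) → ℝ) (x₀ : Fin n → ℝ) : ℝ :=
  ∑ k ∈ Finset.range (hitTime f uhat T x₀),
    h (closedLoop f uhat x₀ k) (uhat (closedLoop f uhat x₀ k))

/-- A pair of sequences `(ξ, μ)` is feasible at `z` for the horizon-`N` MPC
problem with terminal constraint `v (ξ N) > 0`. -/
def mpcFeasible {n m : ℕ} (f : (Fin n → ℝ) → (Fin m → ℝ) → (Fin n → ℝ))
    (U : Set (Fin m → ℝ)) (X : Set (Fin n → ℝ)) (v : (Fin n → ℝ) → ℝ)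
    (N : ℕ) (z : Fin n → ℝ) (ξ : ℕ → (Fin n → ℝ)) (μ : ℕ → (Fin m → ℝ)) : Prop :=
  ξ 0 = z ∧ (∀ k < N, ξ (k + 1) = f (ξ k) (μ k) ∧ μ k ∈ U ∧ ξ k ∈ X) ∧ 0 < v (ξ N)

/-- The MPC value `V(z)`: the infimum of
`Σ_{k<N} h(ξ_k, μ_k) + Q(ξ_N)` over feasible pairs at `z`. -/
noncomputable def mpcValue {n m : ℕ} (f : (Fin n → ℝ) → (Fin m → ℝ) → (Fin n → ℝ))
    (uhat : (Fin n → ℝ) → (Fin m → ℝ)) (U : Set (Fin m → ℝ))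
    (X T : Set (Fin n → ℝ)) (v : (Fin n → ℝ) → ℝ)
    (h : (Fin n → ℝ) → (Fin m → ℝ) → ℝ) (N : ℕ) (z : Fin n → ℝ) : ℝ :=
  sInf {r : ℝ | ∃ ξ : ℕ → (Fin n → ℝ), ∃ μ : ℕ → (Fin m → ℝ),
    mpcFeasible f U X v N z ξ μ ∧
    r = (∑ k ∈ Finset.range N, h (ξ k) (μ k)) + costQ f uhat T h (ξ N)}

/-- Equation (13): the cost of the previous iteration's
trajectory, which follows the feedback `uhat` from time `N` on and reaches `T`
at time `L`, upper-bounds the MPC value at its initial state. -/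
theorem stmt12 {n m : ℕ}
    (f : (Fin n → ℝ) → (Fin m → ℝ) → (Fin n → ℝ))
    (U : Set (Fin m → ℝ)) (X T Y : Set (Fin n → ℝ))
    (hTX : T ⊆ X) (hXY : X ⊆ Y)
    (hfY : ∀ x ∈ X, ∀ u ∈ U, f x u ∈ Y)
    (uhat : (Fin n → ℝ) → (Fin m → ℝ)) (huhat : ∀ x ∈ X, uhat x ∈ U)
    (lam M : ℝ) (hlam : 1 < lam) (hM : 0 < M)
    (v : (Fin n → ℝ) → ℝ)
    (hi : ∀ x ∈ X \ T, v (f x (uhat x)) ≥ lam * v x)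
    (hii : ∀ x ∈ Y \ X, v x ≤ 0)
    (hbdd : ∃ B : ℝ, ∀ y ∈ Y, v y ≤ B)
    (h : (Fin n → ℝ) → (Fin m → ℝ) → ℝ)
    (hpos : ∀ x ∈ X, ∀ u ∈ U, 0 ≤ h x u)
    (N : ℕ) (hN : 1 ≤ N)
    (L : ℕ) (hNL : N ≤ L)
    (x : ℕ → (Fin n → ℝ)) (u : ℕ → (Fin m → ℝ))
    (hdyn : ∀ k < L, x (k + 1) = f (x k) (u k))
    (hu : ∀ k < L, u k ∈ U)
    (hx : ∀ k < L, x k ∈ X)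
    (hnotT : ∀ k < L, x k ∉ T) (hLT : x L ∈ T)
    (hfb : ∀ k, N ≤ k → k < L → u k = uhat (x k))
    (hvN : 0 < v (x N)) :
    mpcValue f uhat U X T v h N (x 0) ≤ ∑ k ∈ Finset.range L, h (x k) (u k) := by

  -- closed loop from x N matches x (N + j) up to L - N
  have hcl : ∀ j, j ≤ L - N → closedLoop f uhat (x N) j = x (N + j) := by
    intro j
    induction j with
    | zero => intro _; simp [closedLoop]
    | succ j ih =>
      intro hj
      have hjL : N + j < L := by omega
      have hxj := ih (by omega)
      simp only [closedLoop, hxj]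
      rw [← hfb (N + j) (by omega) hjL, ← hdyn (N + j) hjL]
      ring_nf
  have hhit : hitTime f uhat T (x N) = L - N := by
    have hmem : L - N ∈ {k : ℕ | closedLoop f uhat (x N) k ∈ T} := by
      simp only [Set.mem_setOf_eq, hcl (L - N) le_rfl]
      have : N + (L - N) = L := by omega
      rw [this]; exact hLT
    apply le_antisymm (Nat.sInf_le hmem)
    by_contra hlt
    push_neg at hlt
    have hne : {k : ℕ | closedLoop f uhat (x N) k ∈ T}.Nonempty := ⟨_, hmem⟩
    have hin := Nat.sInf_mem hne
    set k := sInf {k : ℕ | closedLoop f uhat (x N) k ∈ T}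
    rw [Set.mem_setOf_eq, hcl k (by omega)] at hin
    exact hnotT (N + k) (by omega) hin
  have hQ : costQ f uhat T h (x N)
      = ∑ k ∈ Finset.range (L - N), h (x (N + k)) (u (N + k)) := by
    rw [costQ, hhit]
    apply Finset.sum_congr rfl
    intro k hk
    rw [Finset.mem_range] at hk
    rw [hcl k (by omega), hfb (N + k) (by omega) (by omega)]
  have hsum : (∑ k ∈ Finset.range N, h (x k) (u k)) + costQ f uhat T h (x N)
      = ∑ k ∈ Finset.range L, h (x k) (u k) := by
    rw [hQ]
    have : L = N + (L - N) := by omega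
    rw [this, Finset.sum_range_add, Nat.add_sub_cancel_left]
  have hmemset : (∑ k ∈ Finset.range L, h (x k) (u k)) ∈
      {r : ℝ | ∃ ξ : ℕ → (Fin n → ℝ), ∃ μ : ℕ → (Fin m → ℝ),
        mpcFeasible f U X v N (x 0) ξ μ ∧
        r = (∑ k ∈ Finset.range N, h (ξ k) (μ k)) + costQ f uhat T h (ξ N)} := by
    refine ⟨x, u, ⟨rfl, fun k hk => ⟨hdyn k (by omega), hu k (by omega), hx k (by omega)⟩, hvN⟩, hsum.symm⟩
  by_cases hbb : BddBelow {r : ℝ | ∃ ξ : ℕ → (Fin n → ℝ), ∃ μ : ℕ → (Fin m → ℝ),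
      mpcFeasible f U X v N (x 0) ξ μ ∧
      r = (∑ k ∈ Finset.range N, h (ξ k) (μ k)) + costQ f uhat T h (ξ N)}
  · exact csInf_le hbb hmemset
  · rw [mpcValue, Real.sInf_of_not_bddBelow hbb]
    exact Finset.sum_nonneg fun k hk => by
      rw [Finset.mem_range] at hk
      exact hpos _ (hx k hk) _ (hu k hk)
end

section
/- (Theorem 3: the iteration cost is non-increasing) Assume the guidance-barrier conditions (i), (ii), (iii) hold for (v, û) and v is bounded above on Y. Let N ≥ 1 and let (x'_k)_{k=0}^{L'} be the closed-loop trajectory under û from a state x'_0 ∈ X with v(x'_0) > 0, where L' ≥ N is the first time with x'_{L'} ∈ T (and x'_k ∉ T for k < L'). Suppose there exist S ∈ ℕ, thresholds c_0 = λ^N·v(x'_0) and c_{t+1} = λ·v(x*_{N|t}) for t < S, realized states x_0 = x'_0 and x_{t+1} = x*_{1|t}, and for each t ≤ S a c_t-feasible pair ((x*_{k|t})_{k=0}^{N}, (u*_{k|t})_{k=0}^{N−1}) at x_t attaining the infimum W(c_t, x_t), such that x*_{N|t} ∉ T for all t < S and there is l ≤ N with x*_{l|S} ∈ T. Then the realized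 closed-loop cost Σ_{t=0}^{S−1} h(x_t, u*_{0|t}) + Σ_{k=0}^{l−1} h(x*_{k|S}, u*_{k|S}) is at most the previous iteration cost Σ_{k=0}^{L'−1} h(x'_k, û(x'_k)). -/
/-- A pair of sequences `(ξ, μ)` is `c`-feasible at `z` for the horizon-`N`
MPC problem with terminal constraint `v (ξ N) ≥ c`. -/
def cFeasible {n m : ℕ} (f : (Fin n → ℝ) → (Fin m → ℝ) → (Fin n → ℝ))
    (U : Set (Fin m → ℝ)) (X : Set (Fin n → ℝ)) (v : (Fin n → ℝ) → ℝ)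
    (N : ℕ) (c : ℝ) (z : Fin n → ℝ)
    (ξ : ℕ → (Fin n → ℝ)) (μ : ℕ → (Fin m → ℝ)) : Prop :=
  ξ 0 = z ∧ (∀ k < N, ξ (k + 1) = f (ξ k) (μ k) ∧ μ k ∈ U ∧ ξ k ∈ X) ∧ c ≤ v (ξ N)

/-- The MPC value `W(c, z)`: the infimum of
`Σ_{k<N} h(ξ_k, μ_k) + Q(ξ_N)` over `c`-feasible pairs at `z`. -/
noncomputable def mpcValueW {n m : ℕ} (f : (Fin n → ℝ) → (Fin m → ℝ) → (Fin n → ℝ))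
    (uhat : (Fin n → ℝ) → (Fin m → ℝ)) (U : Set (Fin m → ℝ))
    (X T : Set (Fin n → ℝ)) (v : (Fin n → ℝ) → ℝ)
    (h : (Fin n → ℝ) → (Fin m → ℝ) → ℝ) (N : ℕ) (c : ℝ) (z : Fin n → ℝ) : ℝ :=
  sInf {r : ℝ | ∃ ξ : ℕ → (Fin n → ℝ), ∃ μ : ℕ → (Fin m → ℝ),
    cFeasible f U X v N c z ξ μ ∧
    r = (∑ k ∈ Finset.range N, h (ξ k) (μ k)) + costQ f uhat T h (ξ N)}

section Stmt14Aux
variable {n m : ℕ} {f : (Fin n → ℝ) → (Fin m → ℝ) → (Fin n → ℝ)}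
  {U : Set (Fin m → ℝ)} {X T Y : Set (Fin n → ℝ)}
  {uhat : (Fin n → ℝ) → (Fin m → ℝ)} {lam : ℝ} {v : (Fin n → ℝ) → ℝ}
  {h : (Fin n → ℝ) → (Fin m → ℝ) → ℝ}

lemma closedLoop_shift (f : (Fin n → ℝ) → (Fin m → ℝ) → (Fin n → ℝ))
    (uhat : (Fin n → ℝ) → (Fin m → ℝ)) (z : Fin n → ℝ) (k : ℕ) :
    closedLoop f uhat z (k + 1) = closedLoop f uhat (f z (uhat z)) k := by
  induction k with
  | zero => rfl
  | succ k ih => rw [show k + 1 + 1 = (k+1) + 1 from rfl, closedLoop, ih]; rfl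

lemma traj_grow (hfY : ∀ x ∈ X, ∀ u ∈ U, f x u ∈ Y)
    (huhat : ∀ x ∈ X, uhat x ∈ U) (hlam : 1 < lam)
    (hi : ∀ x ∈ X \ T, v (f x (uhat x)) ≥ lam * v x)
    (hii : ∀ x ∈ Y \ X, v x ≤ 0)
    {z : Fin n → ℝ} (hz : z ∈ X) (hvz : 0 < v z) :
    ∀ k, (∀ j < k, closedLoop f uhat z j ∉ T) →
      closedLoop f uhat z k ∈ X ∧ lam ^ k * v z ≤ v (closedLoop f uhat z k) := by
  intro k
  induction k with
  | zero => intro _; exact ⟨hz, by simp [closedLoop]⟩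
  | succ k ih =>
    intro hk
    have h1 := ih (fun j hj => hk j (by omega))
    have hkT : closedLoop f uhat z k ∉ T := hk k (by omega)
    have hposk : 0 < v (closedLoop f uhat z k) :=
      lt_of_lt_of_le (mul_pos (pow_pos (by linarith) k) hvz) h1.2
    have hgrow : lam * v (closedLoop f uhat z k) ≤ v (closedLoop f uhat z (k+1)) := by
      have := hi _ ⟨h1.1, hkT⟩
      simpa [closedLoop] using this
    have hvsucc : lam ^ (k+1) * v z ≤ v (closedLoop f uhat z (k+1)) := by
      calc lam ^ (k+1) * v z = lam * (lam ^ k * v z) := by ring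
      _ ≤ lam * v (closedLoop f uhat z k) :=
          mul_le_mul_of_nonneg_left h1.2 (by linarith)
      _ ≤ _ := hgrow
    have hY : closedLoop f uhat z (k+1) ∈ Y := by
      show f _ _ ∈ Y
      exact hfY _ h1.1 _ (huhat _ h1.1)
    refine ⟨?_, hvsucc⟩
    by_contra hx
    have hle := hii _ ⟨hY, hx⟩
    have : 0 < v (closedLoop f uhat z (k+1)) :=
      lt_of_lt_of_le (mul_pos (pow_pos (by linarith) (k+1)) hvz) hvsucc
    linarith

lemma reach (hXY : X ⊆ Y) (hfY : ∀ x ∈ X, ∀ u ∈ U, f x u ∈ Y)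
    (huhat : ∀ x ∈ X, uhat x ∈ U) (hlam : 1 < lam)
    (hi : ∀ x ∈ X \ T, v (f x (uhat x)) ≥ lam * v x)
    (hii : ∀ x ∈ Y \ X, v x ≤ 0)
    (hbdd : ∃ B : ℝ, ∀ y ∈ Y, v y ≤ B)
    {z : Fin n → ℝ} (hz : z ∈ X) (hvz : 0 < v z) :
    {k : ℕ | closedLoop f uhat z k ∈ T}.Nonempty := by
  by_contra hne
  rw [Set.not_nonempty_iff_eq_empty] at hne
  have hnot : ∀ k, closedLoop f uhat z k ∉ T := by
    intro k hk
    exact absurd (hne ▸ hk : (k:ℕ) ∈ (∅ : Set ℕ)) (Set.notMem_empty k)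
  obtain ⟨B, hB⟩ := hbdd
  obtain ⟨k, hk⟩ := pow_unbounded_of_one_lt (B / v z) hlam
  have h1 := traj_grow hfY huhat hlam hi hii hz hvz k (fun j _ => hnot j)
  have hBlt : B < lam ^ k * v z := (div_lt_iff₀ hvz).mp hk
  have hBk : v (closedLoop f uhat z k) ≤ B := hB _ (hXY h1.1)
  linarith [h1.2]

lemma before_hit (hfY : ∀ x ∈ X, ∀ u ∈ U, f x u ∈ Y)
    (huhat : ∀ x ∈ X, uhat x ∈ U) (hlam : 1 < lam)
    (hi : ∀ x ∈ X \ T, v (f x (uhat x)) ≥ lam * v x)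
    (hii : ∀ x ∈ Y \ X, v x ≤ 0)
    {z : Fin n → ℝ} (hz : z ∈ X) (hvz : 0 < v z) :
    ∀ k < hitTime f uhat T z, closedLoop f uhat z k ∈ X := by
  intro k hk
  have hnot : ∀ j < hitTime f uhat T z, closedLoop f uhat z j ∉ T :=
    fun j hj => Nat.notMem_of_lt_sInf hj
  exact (traj_grow hfY huhat hlam hi hii hz hvz k (fun j hj => hnot j (by omega))).1

lemma Q_nonneg (hfY : ∀ x ∈ X, ∀ u ∈ U, f x u ∈ Y)
    (huhat : ∀ x ∈ X, uhat x ∈ U) (hlam : 1 < lam)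
    (hi : ∀ x ∈ X \ T, v (f x (uhat x)) ≥ lam * v x)
    (hii : ∀ x ∈ Y \ X, v x ≤ 0)
    (hpos : ∀ x ∈ X, ∀ u ∈ U, 0 ≤ h x u)
    {z : Fin n → ℝ} (hz : z ∈ X) (hvz : 0 < v z) :
    0 ≤ costQ f uhat T h z := by
  apply Finset.sum_nonneg
  intro k hk
  have hX := before_hit hfY huhat hlam hi hii hz hvz k (Finset.mem_range.mp hk)
  exact hpos _ hX _ (huhat _ hX)

lemma hitTime_succ (hXY : X ⊆ Y) (hfY : ∀ x ∈ X, ∀ u ∈ U, f x u ∈ Y)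
    (huhat : ∀ x ∈ X, uhat x ∈ U) (hlam : 1 < lam)
    (hi : ∀ x ∈ X \ T, v (f x (uhat x)) ≥ lam * v x)
    (hii : ∀ x ∈ Y \ X, v x ≤ 0)
    (hbdd : ∃ B : ℝ, ∀ y ∈ Y, v y ≤ B)
    {z : Fin n → ℝ} (hz : z ∈ X) (hzT : z ∉ T) (hvz : 0 < v z) :
    hitTime f uhat T z = hitTime f uhat T (f z (uhat z)) + 1 := by
  set w := f z (uhat z) with hw
  have hwY : w ∈ Y := hfY _ hz _ (huhat _ hz)
  have hvw : 0 < v w := lt_of_lt_of_le (mul_pos (by linarith) hvz) (hi _ ⟨hz, hzT⟩)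
  have hwX : w ∈ X := by by_contra hx; linarith [hii _ ⟨hwY, hx⟩]
  have hBne := reach hXY hfY huhat hlam hi hii hbdd hwX hvw
  have hmemB := Nat.sInf_mem hBne
  have hshift : ∀ k, closedLoop f uhat z (k+1) = closedLoop f uhat w k :=
    fun k => closedLoop_shift f uhat z k
  unfold hitTime
  apply le_antisymm
  · exact Nat.sInf_le (by
      show closedLoop f uhat z (sInf {k | closedLoop f uhat w k ∈ T} + 1) ∈ T
      rw [hshift]; exact hmemB)
  · have hAne : {k | closedLoop f uhat z k ∈ T}.Nonempty :=
      ⟨sInf {k | closedLoop f uhat w k ∈ T} + 1, by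
        show closedLoop f uhat z _ ∈ T
        rw [hshift]; exact hmemB⟩
    have hmemA := Nat.sInf_mem hAne
    rcases Nat.eq_zero_or_pos (sInf {k | closedLoop f uhat z k ∈ T}) with h0 | hpos'
    · rw [h0] at hmemA
      exact absurd hmemA hzT
    · obtain ⟨j, hj⟩ := Nat.exists_eq_succ_of_ne_zero (Nat.pos_iff_ne_zero.mp hpos')
      rw [hj] at hmemA ⊢
      have : closedLoop f uhat w j ∈ T := by rw [← hshift]; exact hmemA
      exact Nat.succ_le_succ (Nat.sInf_le this)

lemma Q_succ (hXY : X ⊆ Y) (hfY : ∀ x ∈ X, ∀ u ∈ U, f x u ∈ Y)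
    (huhat : ∀ x ∈ X, uhat x ∈ U) (hlam : 1 < lam)
    (hi : ∀ x ∈ X \ T, v (f x (uhat x)) ≥ lam * v x)
    (hii : ∀ x ∈ Y \ X, v x ≤ 0)
    (hbdd : ∃ B : ℝ, ∀ y ∈ Y, v y ≤ B)
    {z : Fin n → ℝ} (hz : z ∈ X) (hzT : z ∉ T) (hvz : 0 < v z) :
    costQ f uhat T h z = h z (uhat z) + costQ f uhat T h (f z (uhat z)) := by
  unfold costQ
  rw [hitTime_succ hXY hfY huhat hlam hi hii hbdd hz hzT hvz, Finset.sum_range_succ']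
  have h0 : closedLoop f uhat z 0 = z := rfl
  rw [h0, add_comm]
  congr 1
  apply Finset.sum_congr rfl
  intro k _
  rw [closedLoop_shift]

lemma terminal_mem (hfY : ∀ x ∈ X, ∀ u ∈ U, f x u ∈ Y)
    (hii : ∀ x ∈ Y \ X, v x ≤ 0)
    {N : ℕ} (hN : 1 ≤ N) {c : ℝ} (hc : 0 < c) {z : Fin n → ℝ}
    {ξ : ℕ → (Fin n → ℝ)} {μ : ℕ → (Fin m → ℝ)}
    (hf : cFeasible f U X v N c z ξ μ) : ξ N ∈ X ∧ 0 < v (ξ N) := by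
  obtain ⟨-, hstep, hterm⟩ := hf
  have hd := hstep (N - 1) (by omega)
  have hNY : ξ N ∈ Y := by
    have : ξ (N - 1 + 1) ∈ Y := by rw [hd.1]; exact hfY _ hd.2.2 _ hd.2.1
    rwa [Nat.sub_add_cancel hN] at this
  have hv : 0 < v (ξ N) := lt_of_lt_of_le hc hterm
  refine ⟨?_, hv⟩
  by_contra hx
  linarith [hii _ ⟨hNY, hx⟩]

lemma W_le (hXY : X ⊆ Y) (hfY : ∀ x ∈ X, ∀ u ∈ U, f x u ∈ Y)
    (huhat : ∀ x ∈ X, uhat x ∈ U) (hlam : 1 < lam)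
    (hi : ∀ x ∈ X \ T, v (f x (uhat x)) ≥ lam * v x)
    (hii : ∀ x ∈ Y \ X, v x ≤ 0)
    (hpos : ∀ x ∈ X, ∀ u ∈ U, 0 ≤ h x u)
    {N : ℕ} (hN : 1 ≤ N) {c : ℝ} (hc : 0 < c) {z : Fin n → ℝ}
    {ξ : ℕ → (Fin n → ℝ)} {μ : ℕ → (Fin m → ℝ)}
    (hf : cFeasible f U X v N c z ξ μ) :
    mpcValueW f uhat U X T v h N c z
      ≤ (∑ k ∈ Finset.range N, h (ξ k) (μ k)) + costQ f uhat T h (ξ N) := by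
  apply csInf_le
  · refine ⟨0, fun r hr => ?_⟩
    obtain ⟨ξ', μ', hf', rfl⟩ := hr
    obtain ⟨hX', hv'⟩ := terminal_mem hfY hii hN hc hf'
    have hQ := Q_nonneg (T := T) hfY huhat hlam hi hii hpos hX' hv'
    have hsum : 0 ≤ ∑ k ∈ Finset.range N, h (ξ' k) (μ' k) :=
      Finset.sum_nonneg fun k hk => by
        have hs := hf'.2.1 k (Finset.mem_range.mp hk)
        exact hpos _ hs.2.2 _ hs.2.1
    linarith
  · exact ⟨ξ, μ, hf, rfl⟩

end Stmt14Aux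

/-- Theorem 3: the iteration cost is non-increasing: the
realized closed-loop cost of the RAMPC iteration is at most the cost of the
previous iteration's closed-loop trajectory under `uhat`. -/


theorem stmt14 {n m : ℕ}
    (f : (Fin n → ℝ) → (Fin m → ℝ) → (Fin n → ℝ))
    (U : Set (Fin m → ℝ)) (X T Y : Set (Fin n → ℝ))
    (hTX : T ⊆ X) (hXY : X ⊆ Y)
    (hfY : ∀ x ∈ X, ∀ u ∈ U, f x u ∈ Y)
    (uhat : (Fin n → ℝ) → (Fin m → ℝ)) (huhat : ∀ x ∈ X, uhat x ∈ U)
    (lam M : ℝ) (hlam : 1 < lam) (hM : 0 < M)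
    (v : (Fin n → ℝ) → ℝ)
    (hi : ∀ x ∈ X \ T, v (f x (uhat x)) ≥ lam * v x)
    (hii : ∀ x ∈ Y \ X, v x ≤ 0)
    (hiii : ∀ x ∈ T, v x ≤ M)
    (hbdd : ∃ B : ℝ, ∀ y ∈ Y, v y ≤ B)
    (h : (Fin n → ℝ) → (Fin m → ℝ) → ℝ)
    (hpos : ∀ x ∈ X, ∀ u ∈ U, 0 ≤ h x u)
    (N : ℕ) (hN : 1 ≤ N)
    -- the previous iteration's closed-loop trajectory under uhat
    (x' : ℕ → (Fin n → ℝ)) (hx'0 : x' 0 ∈ X) (hv0 : 0 < v (x' 0))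
    (hdyn' : ∀ k, x' (k + 1) = f (x' k) (uhat (x' k)))
    (L' : ℕ) (hL'N : N ≤ L')
    (hL'T : x' L' ∈ T) (hL'first : ∀ k < L', x' k ∉ T)
    -- the RAMPC iteration: thresholds, realized states and optimal pairs
    (S : ℕ) (c : ℕ → ℝ) (xr : ℕ → (Fin n → ℝ))
    (xs : ℕ → ℕ → (Fin n → ℝ)) (us : ℕ → ℕ → (Fin m → ℝ))
    (hc0 : c 0 = lam ^ N * v (x' 0))
    (hcsucc : ∀ t < S, c (t + 1) = lam * v (xs t N))
    (hxr0 : xr 0 = x' 0)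
    (hxrsucc : ∀ t < S, xr (t + 1) = xs t 1)
    (hfeas : ∀ t ≤ S, cFeasible f U X v N (c t) (xr t) (xs t) (us t))
    (hopt : ∀ t ≤ S,
      (∑ k ∈ Finset.range N, h (xs t k) (us t k)) + costQ f uhat T h (xs t N)
        = mpcValueW f uhat U X T v h N (c t) (xr t))
    (hnotT : ∀ t < S, xs t N ∉ T)
    (l : ℕ) (hlN : l ≤ N) (hlT : xs S l ∈ T) :
    (∑ t ∈ Finset.range S, h (xr t) (us t 0))
        + (∑ k ∈ Finset.range l, h (xs S k) (us S k))
      ≤ ∑ k ∈ Finset.range L', h (x' k) (uhat (x' k)) := by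
  obtain ⟨N', rfl⟩ : ∃ N', N = N' + 1 := ⟨N - 1, by omega⟩
  -- the previous trajectory is a closed loop
  have hx'cl : ∀ k, x' k = closedLoop f uhat (x' 0) k := by
    intro k; induction k with
    | zero => rfl
    | succ k ih => rw [hdyn', ih]; rfl
  have hx'X : ∀ k ≤ L', x' k ∈ X ∧ lam ^ k * v (x' 0) ≤ v (x' k) := by
    intro k hk
    have := traj_grow hfY huhat hlam hi hii hx'0 hv0 k (by
      intro j hj
      rw [← hx'cl]
      exact hL'first j (by omega))
    rwa [← hx'cl] at this
  -- the closed loop from x' N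
  have hclN : ∀ k, closedLoop f uhat (x' (N'+1)) k = x' (N' + 1 + k) := by
    intro k; induction k with
    | zero => rfl
    | succ k ih =>
      show f _ _ = _
      rw [ih, ← hdyn']
      rfl
  have hhitN : hitTime f uhat T (x' (N'+1)) = L' - (N'+1) := by
    have hmem : L' - (N'+1) ∈ {k : ℕ | closedLoop f uhat (x' (N'+1)) k ∈ T} := by
      show closedLoop _ _ _ _ ∈ T
      rw [hclN, show N' + 1 + (L' - (N'+1)) = L' by omega]
      exact hL'T
    apply le_antisymm (Nat.sInf_le hmem)
    by_contra hlt
    push_neg at hlt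
    have hm := Nat.sInf_mem (⟨_, hmem⟩ : Set.Nonempty _)
    rw [Set.mem_setOf_eq, hclN] at hm
    exact hL'first _ (by omega) hm
  have hQN : costQ f uhat T h (x' (N'+1))
      = ∑ k ∈ Finset.range (L' - (N'+1)), h (x' (N'+1+k)) (uhat (x' (N'+1+k))) := by
    unfold costQ
    rw [hhitN]
    exact Finset.sum_congr rfl fun k _ => by rw [hclN]
  have hLsplit : ∑ k ∈ Finset.range L', h (x' k) (uhat (x' k))
      = (∑ k ∈ Finset.range (N'+1), h (x' k) (uhat (x' k)))
        + ∑ k ∈ Finset.range (L'-(N'+1)), h (x' (N'+1+k)) (uhat (x' (N'+1+k))) := by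
    have hL : L' = (N'+1) + (L' - (N'+1)) := by omega
    conv_lhs => rw [hL, Finset.sum_range_add]
  -- positivity of thresholds and terminal states
  have hterm : ∀ t ≤ S, 0 < c t → xs t (N'+1) ∈ X ∧ 0 < v (xs t (N'+1)) :=
    fun t ht hc => terminal_mem hfY hii (by omega) hc (hfeas t ht)
  have hcpos : ∀ t ≤ S, 0 < c t := by
    intro t
    induction t with
    | zero => intro _; rw [hc0]; exact mul_pos (pow_pos (by linarith) _) hv0
    | succ t ih =>
      intro ht
      have htS : t < S := by omega
      have h1 := ih (by omega)
      have h2 := hterm t (by omega) h1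
      rw [hcsucc t htS]
      exact mul_pos (by linarith) h2.2
  have hxsX : ∀ t ≤ S, xs t (N'+1) ∈ X ∧ 0 < v (xs t (N'+1)) :=
    fun t ht => hterm t ht (hcpos t ht)
  -- Claim 1 : V 0 is at most the previous cost
  have hfeas0 : cFeasible f U X v (N'+1) (c 0) (xr 0) x' (fun k => uhat (x' k)) := by
    refine ⟨hxr0.symm, fun k hk =>
      ⟨hdyn' k, huhat _ (hx'X k (by omega)).1, (hx'X k (by omega)).1⟩, ?_⟩
    rw [hc0]
    exact (hx'X (N'+1) (by omega)).2
  have hclaim1 : (∑ k ∈ Finset.range (N'+1), h (xs 0 k) (us 0 k))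
        + costQ f uhat T h (xs 0 (N'+1))
      ≤ ∑ k ∈ Finset.range L', h (x' k) (uhat (x' k)) := by
    rw [hopt 0 (Nat.zero_le S)]
    calc mpcValueW f uhat U X T v h (N'+1) (c 0) (xr 0)
        ≤ (∑ k ∈ Finset.range (N'+1), h (x' k) (uhat (x' k)))
            + costQ f uhat T h (x' (N'+1)) :=
          W_le hXY hfY huhat hlam hi hii hpos (by omega) (hcpos 0 (Nat.zero_le S)) hfeas0
      _ = _ := by rw [hQN, hLsplit]
  -- Claim 2 : one-step decrease
  have hclaim2 : ∀ t < S,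
      h (xr t) (us t 0) + ((∑ k ∈ Finset.range (N'+1), h (xs (t+1) k) (us (t+1) k))
          + costQ f uhat T h (xs (t+1) (N'+1)))
        ≤ (∑ k ∈ Finset.range (N'+1), h (xs t k) (us t k))
          + costQ f uhat T h (xs t (N'+1)) := by
    intro t ht
    obtain ⟨hzX, hzv⟩ := hxsX t (le_of_lt ht)
    have hzT : xs t (N'+1) ∉ T := hnotT t ht
    set z := xs t (N'+1) with hz
    set ξ : ℕ → (Fin n → ℝ) := fun k => if k < N'+1 then xs t (k+1) else f z (uhat z) with hξ
    set μ : ℕ → (Fin m → ℝ) := fun k => if k+1 < N'+1 then us t (k+1) else uhat z with hμ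
    have hfs := hfeas t (le_of_lt ht)
    have hfeascand : cFeasible f U X v (N'+1) (c (t+1)) (xr (t+1)) ξ μ := by
      refine ⟨?_, ?_, ?_⟩
      · simp only [hξ]
        rw [if_pos (by omega : (0:ℕ) < N'+1), hxrsucc t ht]
      · intro k hk
        by_cases hk1 : k + 1 < N' + 1
        · have hstep := hfs.2.1 (k+1) hk1
          refine ⟨?_, ?_, ?_⟩
          · simp only [hξ, hμ]
            rw [if_pos hk1, if_pos (by omega : k < N'+1), if_pos hk1]
            exact hstep.1
          · simp only [hμ]
            rw [if_pos hk1]; exact hstep.2.1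
          · simp only [hξ]
            rw [if_pos (by omega : k < N'+1)]; exact hstep.2.2
        · have hk2 : k + 1 = N' + 1 := by omega
          refine ⟨?_, ?_, ?_⟩
          · simp only [hξ, hμ]
            rw [if_neg hk1, if_pos (by omega : k < N'+1), if_neg hk1, hk2, ← hz]
          · simp only [hμ]
            rw [if_neg hk1]
            exact huhat _ hzX
          · simp only [hξ]
            rw [if_pos (by omega : k < N'+1), hk2, ← hz]
            exact hzX
      · simp only [hξ]
        rw [if_neg (by omega : ¬ (N'+1 < N'+1)), hcsucc t ht]
        exact hi _ ⟨hzX, hzT⟩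
    have hWle := W_le hXY hfY huhat hlam hi hii hpos (by omega : 1 ≤ N'+1)
      (hcpos (t+1) (by omega)) hfeascand
    rw [← hopt (t+1) (by omega)] at hWle
    have hcand : (∑ k ∈ Finset.range (N'+1), h (ξ k) (μ k))
        = (∑ k ∈ Finset.range N', h (xs t (k+1)) (us t (k+1))) + h z (uhat z) := by
      rw [Finset.sum_range_succ]
      congr 1
      · apply Finset.sum_congr rfl
        intro k hk
        have hk' := Finset.mem_range.mp hk
        simp only [hξ, hμ]
        rw [if_pos (by omega : k < N'+1), if_pos (by omega : k+1 < N'+1)]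
      · simp only [hξ, hμ]
        rw [if_pos (by omega : N' < N'+1), if_neg (by omega : ¬ (N'+1 < N'+1))]
    have hξN : ξ (N'+1) = f z (uhat z) := by
      simp only [hξ]
      rw [if_neg (by omega : ¬ (N'+1 < N'+1))]
    have hQs : costQ f uhat T h z = h z (uhat z) + costQ f uhat T h (f z (uhat z)) :=
      Q_succ hXY hfY huhat hlam hi hii hbdd hzX hzT hzv
    have hsplit : (∑ k ∈ Finset.range (N'+1), h (xs t k) (us t k))
        = h (xs t 0) (us t 0) + ∑ k ∈ Finset.range N', h (xs t (k+1)) (us t (k+1)) := by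
      rw [Finset.sum_range_succ']; ring
    have hx0 : xs t 0 = xr t := hfs.1
    rw [hcand, hξN] at hWle
    rw [hsplit, hx0]
    linarith
  -- Claim 3 : the final partial cost is at most V S
  have hclaim3 : (∑ k ∈ Finset.range l, h (xs S k) (us S k))
      ≤ (∑ k ∈ Finset.range (N'+1), h (xs S k) (us S k))
        + costQ f uhat T h (xs S (N'+1)) := by
    obtain ⟨hSX, hSv⟩ := hxsX S le_rfl
    have hQ := Q_nonneg hfY huhat hlam hi hii hpos hSX hSv
    have hmono : (∑ k ∈ Finset.range l, h (xs S k) (us S k))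
        ≤ ∑ k ∈ Finset.range (N'+1), h (xs S k) (us S k) := by
      apply Finset.sum_le_sum_of_subset_of_nonneg (Finset.range_subset_range.mpr hlN)
      intro k hk _
      have hs := (hfeas S le_rfl).2.1 k (Finset.mem_range.mp hk)
      exact hpos _ hs.2.2 _ hs.2.1
    linarith
  -- telescoping
  have hmain : ∀ t ≤ S, (∑ s ∈ Finset.range t, h (xr s) (us s 0))
      + ((∑ k ∈ Finset.range (N'+1), h (xs t k) (us t k))
          + costQ f uhat T h (xs t (N'+1)))
      ≤ (∑ k ∈ Finset.range (N'+1), h (xs 0 k) (us 0 k))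
          + costQ f uhat T h (xs 0 (N'+1)) := by
    intro t
    induction t with
    | zero => intro _; simp
    | succ t ih =>
      intro ht
      have h2 := hclaim2 t (by omega)
      have h1 := ih (by omega)
      rw [Finset.sum_range_succ]
      linarith
  have hms := hmain S le_rfl
  linarith [hclaim1, hclaim3, hms]
end
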